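/- Addable and removable nodes are determined by the boundary flow. Let f be a flow on a valid ladder presentation P of length s (parameters n, ℓ, m), let 0 ≤ r ≤ s, and let T^{(r)} denote the standard n-multitableau produced by the filling map ι from the first r steps of f. Then for every ρ ∈ {1,…,m−1} and every component index t ∈ {1,…,n}: the t-th component of T^{(r)} has an addable node of residue ρ if and only if t ∈ S^{(r)}_ρ ∖ S^{(r)}_{ρ+1}, and it has a removable node of residue ρ if and only if t ∈ S^{(r)}_{ρ+1} ∖ S^{(r)}_ρ. -/

import Mathlib

open scoped Classical

namespace SlnWeb

noncomputable section

/-- `p r` is the length of the `r`-th row (0-indexed) of a Young diagram. -/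
def IsPartition (p : ℕ → ℕ) : Prop :=
  Antitone p ∧ ∃ N, p N = 0

/-- The 0-indexed cell `(r, c)` lies in the Young diagram of `p`. -/
def InDiag (p : ℕ → ℕ) (r c : ℕ) : Prop :=
  c < p r

/-- Residue (with shift `ℓ`) of the 0-indexed cell `(r, c)`; for the
corresponding 1-indexed cell `(r+1, c+1)` this is `(c+1) - (r+1) + ℓ`. -/
def resOf (ℓ : ℕ) (r c : ℕ) : ℤ :=
  (c : ℤ) - (r : ℤ) + (ℓ : ℤ)

/-- `(r, c)` (0-indexed) is an addable cell of `p`. -/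
def IsAddableCell (p : ℕ → ℕ) (r c : ℕ) : Prop :=
  c = p r ∧ (r = 0 ∨ p r < p (r - 1))

/-- `(r, c)` (0-indexed) is a removable cell of `p`. -/
def IsRemovableCell (p : ℕ → ℕ) (r c : ℕ) : Prop :=
  c + 1 = p r ∧ p (r + 1) < p r

/-- Add to `p` its (unique) addable cell of residue `k`, if there is one. -/
def addRes (ℓ : ℕ) (p : ℕ → ℕ) (k : ℤ) : ℕ → ℕ :=
  if h : ∃ r, (r = 0 ∨ p r < p (r - 1)) ∧ (p r : ℤ) - (r : ℤ) + (ℓ : ℤ) = k then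
    Function.update p h.choose (p h.choose + 1)
  else p

/-- A multitableau: `shape t r` is the length of the `r`-th row (0-indexed) of
the `t`-th component (components are indexed by `t ∈ {1,…,n}`), and
`entry t r c` is the entry of the 0-indexed cell `(r, c)` of the `t`-th
component; everything is normalised to `0` outside of the diagrams. -/
structure MultiTableau where
  shape : ℕ → ℕ → ℕ
  entry : ℕ → ℕ → ℕ → ℕ

/-- A standard `n`-multitableau with entries in `{1,…,s}` (residue shift `ℓ`):
each component is a partition, components are normalised to be empty outside
of `{1,…,n}`, entries lie in `{1,…,s}` and are normalised to `0` outside the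
diagram, entries strictly increase along rows and down columns, no entry is
repeated inside a single component, and all nodes carrying the same entry have
the same residue. -/
def IsStandard (n ℓ s : ℕ) (M : MultiTableau) : Prop :=
  (∀ t, IsPartition (M.shape t)) ∧
  (∀ t, (t = 0 ∨ n < t) → ∀ r, M.shape t r = 0) ∧
  (∀ t r c, InDiag (M.shape t) r c → 1 ≤ M.entry t r c ∧ M.entry t r c ≤ s) ∧
  (∀ t r c, ¬ InDiag (M.shape t) r c → M.entry t r c = 0) ∧
  (∀ t r c c', c < c' → InDiag (M.shape t) r c' → M.entry t r c < M.entry t r c') ∧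
  (∀ t r r' c, r < r' → InDiag (M.shape t) r' c → M.entry t r c < M.entry t r' c) ∧
  (∀ t r c r' c', InDiag (M.shape t) r c → InDiag (M.shape t) r' c' →
    M.entry t r c = M.entry t r' c' → r = r' ∧ c = c') ∧
  (∀ t r c t' r' c', InDiag (M.shape t) r c → InDiag (M.shape t') r' c' →
    M.entry t r c = M.entry t' r' c' → resOf ℓ r c = resOf ℓ r' c')

/-- A ladder presentation of length `s` for the parameters `n`, `ℓ`, `m`:
the `r`-th step is `F_{i_r}^{(j_r)}` with `i_r = res r ∈ {1,…,m-1}` and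
`j_r = mult r ∈ {1,…,n}`. -/
structure LadderPresentation (n ℓ m s : ℕ) where
  res : Fin s → ℕ
  mult : Fin s → ℕ
  res_pos : ∀ r, 1 ≤ res r
  res_lt : ∀ r, res r < m
  mult_pos : ∀ r, 1 ≤ mult r
  mult_le : ∀ r, mult r ≤ n

/-- The weight sequence `k⁽⁰⁾, k⁽¹⁾, …` of a ladder presentation; positions `p`
are 1-indexed, `k⁽⁰⁾ = (n^ℓ)` and `k⁽ʳ⁾ = k⁽ʳ⁻¹⁾ - j_r·e_{i_r} + j_r·e_{i_r+1}`. -/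
def wtSeq {n ℓ m s : ℕ} (P : LadderPresentation n ℓ m s) : ℕ → ℕ → ℤ
  | 0, p => if 1 ≤ p ∧ p ≤ ℓ then (n : ℤ) else 0
  | r + 1, p =>
    if h : r < s then
      wtSeq P r p - (if p = P.res ⟨r, h⟩ then (P.mult ⟨r, h⟩ : ℤ) else 0) +
        (if p = P.res ⟨r, h⟩ + 1 then (P.mult ⟨r, h⟩ : ℤ) else 0)
    else wtSeq P r p

/-- A ladder presentation is valid if every entry of every weight in its weight
sequence lies in `{0,…,n}`. -/
def IsValid {n ℓ m s : ℕ} (P : LadderPresentation n ℓ m s) : Prop :=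
  ∀ r, r ≤ s → ∀ p, 1 ≤ p → p ≤ m → 0 ≤ wtSeq P r p ∧ wtSeq P r p ≤ (n : ℤ)

/-- A flow on a (valid) ladder presentation `P`.  `S r p ⊆ {1,…,n}` is the flow
label of the `p`-th boundary point after `r` steps (normalised to `∅` outside
`p ∈ {1,…,m}`), and `T r` is the flow label of the rung of the `r`-th ladder. -/
structure LadderFlow {n ℓ m s : ℕ} (P : LadderPresentation n ℓ m s) where
  S : Fin (s + 1) → ℕ → Finset ℕ
  T : Fin s → Finset ℕ
  S_sub : ∀ r p, S r p ⊆ Finset.Icc 1 n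
  S_outside : ∀ r p, (p = 0 ∨ m < p) → S r p = ∅
  S_card : ∀ r p, 1 ≤ p → p ≤ m → ((S r p).card : ℤ) = wtSeq P r.val p
  S_init : ∀ p, 1 ≤ p → p ≤ m → S 0 p = if p ≤ ℓ then Finset.Icc 1 n else ∅
  T_sub : ∀ r : Fin s, T r ⊆ S r.castSucc (P.res r)
  T_card : ∀ r : Fin s, (T r).card = P.mult r
  T_disj : ∀ r : Fin s, Disjoint (T r) (S r.castSucc (P.res r + 1))
  S_step_res : ∀ r : Fin s, S r.succ (P.res r) = S r.castSucc (P.res r) \ T r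
  S_step_res1 : ∀ r : Fin s, S r.succ (P.res r + 1) = S r.castSucc (P.res r + 1) ∪ T r
  S_step_other : ∀ r : Fin s, ∀ p, p ≠ P.res r → p ≠ P.res r + 1 →
    S r.succ p = S r.castSucc p

/-- Add, for every component `t ∈ Tset`, the (unique) addable cell of residue
`k` of that component, giving each of the new cells the entry `e`. -/
def stepAdd (ℓ : ℕ) (k : ℤ) (e : ℕ) (Tset : Finset ℕ) (M : MultiTableau) :
    MultiTableau where
  shape := fun t => if t ∈ Tset then addRes ℓ (M.shape t) k else M.shape t
  entry := fun t r c =>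
    if t ∈ Tset ∧ M.shape t r ≤ c ∧ c < addRes ℓ (M.shape t) k r then e
    else M.entry t r c

/-- The sequence of intermediate multitableaux built by the filling map `ι`:
at step `r` (0-indexed), for each `t ∈ T r`, the unique addable node of residue
`i_r` is added to the `t`-th component, with entry `r + 1`. -/
def iotaAux {n ℓ m s : ℕ} (P : LadderPresentation n ℓ m s) (f : LadderFlow P) :
    ℕ → MultiTableau
  | 0 => ⟨fun _ _ => 0, fun _ _ _ => 0⟩
  | r + 1 =>
    if h : r < s then
      stepAdd ℓ (P.res ⟨r, h⟩ : ℤ) (r + 1) (f.T ⟨r, h⟩) (iotaAux P f r)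
    else iotaAux P f r

/-- The filling map `ι`. -/
def iotaMap {n ℓ m s : ℕ} (P : LadderPresentation n ℓ m s) (f : LadderFlow P) :
    MultiTableau :=
  iotaAux P f s

/-- Every entry of `{1,…,s}` occurs in `M`. -/
def AllEntriesOccur (s : ℕ) (M : MultiTableau) : Prop :=
  ∀ e, 1 ≤ e → e ≤ s → ∃ t r c, InDiag (M.shape t) r c ∧ M.entry t r c = e

/-- All nodes of `M` have residue in `{1,…,m-1}`. -/
def ResInRange (ℓ m : ℕ) (M : MultiTableau) : Prop :=
  ∀ t r c, InDiag (M.shape t) r c → 1 ≤ resOf ℓ r c ∧ resOf ℓ r c ≤ (m : ℤ) - 1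

/-- `(P, f)` is the image of the multitableau `M` under the growth map `g`:
`i_r` is the common residue of the nodes of `M` with entry `r`, and `T r` is
the set of components of `M` containing a node with entry `r` (the remaining
data of `f`, i.e. the tuples `S`, is forced by the flow conditions, and
`j_r = |T r|` is forced by the flow condition `T_card`). -/
def GrowthData {n ℓ m s : ℕ} (M : MultiTableau) (P : LadderPresentation n ℓ m s)
    (f : LadderFlow P) : Prop :=
  (∀ r : Fin s, ∀ t r' c, InDiag (M.shape t) r' c → M.entry t r' c = r.val + 1 →
    (P.res r : ℤ) = resOf ℓ r' c) ∧
  (∀ r : Fin s, ∀ t,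
    t ∈ f.T r ↔ ∃ r' c, InDiag (M.shape t) r' c ∧ M.entry t r' c = r.val + 1)

/-- `#{(a,b) ∈ A × B : a < b}`. -/
def inv2 (A B : Finset ℕ) : ℕ :=
  ((A ×ˢ B).filter fun ab => ab.1 < ab.2).card

/-- The weight of a flow:
`wt(f) = Σ_r ( inv(S⁽ʳ⁾_{i_r}, T_r) − inv(S⁽ʳ⁻¹⁾_{i_r+1}, T_r) )`. -/
def wtFlow {n ℓ m s : ℕ} (P : LadderPresentation n ℓ m s) (f : LadderFlow P) : ℤ :=
  ∑ r : Fin s,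
    ((inv2 (f.S r.succ (P.res r)) (f.T r) : ℤ) -
      (inv2 (f.S r.castSucc (P.res r + 1)) (f.T r) : ℤ))

/-- The components of `M` (among `{1,…,n}`) containing a node with entry `j`. -/
def compsWith (n : ℕ) (M : MultiTableau) (j : ℕ) : Finset ℕ :=
  (Finset.Icc 1 n).filter fun t => ∃ r c, InDiag (M.shape t) r c ∧ M.entry t r c = j

/-- The shape of `M` with all entries `> j` removed, where moreover in the
components outside `Keep` the nodes with entry `j` are removed as well. -/
def shapeTrunc (M : MultiTableau) (j : ℕ) (Keep : Finset ℕ) : ℕ → ℕ → ℕ :=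
  fun t r =>
    ((Finset.range (M.shape t r)).filter fun c =>
      M.entry t r c ≤ (if t ∈ Keep then j else j - 1)).card

/-- The row of the node with entry `j` in component `t` of `M`. -/
def nodeRow (M : MultiTableau) (j t : ℕ) : ℕ :=
  if h : ∃ r c, InDiag (M.shape t) r c ∧ M.entry t r c = j then h.choose else 0

/-- The column of the node with entry `j` in component `t` of `M`. -/
def nodeCol (M : MultiTableau) (j t : ℕ) : ℕ :=
  if h : ∃ r c, InDiag (M.shape t) r c ∧ M.entry t r c = j then
    h.choose_spec.choose
  else 0

/-- The number of addable nodes of `sh` of residue `ρ` lying strictly after the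
position `(t, r)` in the order `⪯` (at most one addable node of a given residue
per component). -/
def cntAddAfter (n ℓ : ℕ) (sh : ℕ → ℕ → ℕ) (ρ : ℤ) (t r : ℕ) : ℕ :=
  ((Finset.Icc 1 n).filter fun t' => ∃ r' c', IsAddableCell (sh t') r' c' ∧
    resOf ℓ r' c' = ρ ∧ (t' < t ∨ (t' = t ∧ r < r'))).card

/-- The number of removable nodes of `sh` of residue `ρ` lying strictly after
the position `(t, r)` in the order `⪯`. -/
def cntRemAfter (n ℓ : ℕ) (sh : ℕ → ℕ → ℕ) (ρ : ℤ) (t r : ℕ) : ℕ :=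
  ((Finset.Icc 1 n).filter fun t' => ∃ r' c', IsRemovableCell (sh t') r' c' ∧
    resOf ℓ r' c' = ρ ∧ (t' < t ∨ (t' = t ∧ r < r'))).card

/-- The contribution `deg(Tʲ)` of the entry `j` to the Brundan–Kleshchev–Wang
degree of the standard multitableau `M`: listing the nodes with entry `j` as
`N₁ ≺ ⋯ ≺ N_t` (i.e. by decreasing component index), it is
`Σ_p (A_p − R_p) − t(t−1)/2`, where `A_p` (resp. `R_p`) is the number of
addable (resp. removable) nodes of the residue of `N_p`, strictly after `N_p`,
of the multipartition underlying `Tʲ` with the nodes `N_{p+1},…,N_t` removed. -/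
def degStep (n ℓ : ℕ) (M : MultiTableau) (j : ℕ) : ℤ :=
  (∑ t ∈ compsWith n M j,
    ((cntAddAfter n ℓ (shapeTrunc M j ((compsWith n M j).filter fun t' => t ≤ t'))
        (resOf ℓ (nodeRow M j t) (nodeCol M j t)) t (nodeRow M j t) : ℤ) -
      (cntRemAfter n ℓ (shapeTrunc M j ((compsWith n M j).filter fun t' => t ≤ t'))
        (resOf ℓ (nodeRow M j t) (nodeCol M j t)) t (nodeRow M j t) : ℤ))) -
  (((compsWith n M j).card * ((compsWith n M j).card - 1) / 2 : ℕ) : ℤ)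

/-- The Brundan–Kleshchev–Wang degree of a standard multitableau with entries
in `{1,…,s}`. -/
def degBKW (n ℓ s : ℕ) (M : MultiTableau) : ℤ :=
  ∑ j ∈ Finset.Icc 1 s, degStep n ℓ M j

/-- `M` has the residue sequence `((i_1,j_1),…,(i_s,j_s))` recorded by `P`:
for each `r`, exactly `j_r` nodes of `M` carry the entry `r` (equivalently,
under standardness, `j_r` components contain the entry `r`) and they all have
residue `i_r`. -/
def HasResSeq {n ℓ m s : ℕ} (P : LadderPresentation n ℓ m s) (M : MultiTableau) :
    Prop :=
  ∀ r : Fin s,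
    (compsWith n M (r.val + 1)).card = P.mult r ∧
    ∀ t r' c, InDiag (M.shape t) r' c → M.entry t r' c = r.val + 1 →
      resOf ℓ r' c = (P.res r : ℤ)

/-- The multipartition `λ(S)` determined by a boundary tuple `S`: writing
`p_1 < ⋯ < p_ℓ` for the elements of `{ p ∈ {1,…,m} : t ∈ S p }`, the `r`-th
part (1-indexed) of its `t`-th component is `p_{ℓ+1−r} − (ℓ+1−r)`. -/
def shapeOfTuple (ℓ m : ℕ) (Sb : ℕ → Finset ℕ) : ℕ → ℕ → ℕ :=
  fun t r =>
    if r < ℓ then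
      (((Finset.Icc 1 m).filter fun p => t ∈ Sb p).sort (· ≤ ·)).getD (ℓ - 1 - r) 0 -
        (ℓ - r)
    else 0

/-!
Encode each component by its beta-set: the residues `resOf ℓ q (sh q)`, `q < ℓ`, of the
nodes just right of its first `ℓ` rows (the bead positions of an abacus with `ℓ` beads).
An addable node of residue `ρ` is a bead at `ρ` with position `ρ + 1` empty, a removable
one a bead at `ρ + 1` with `ρ` empty, and adding the addable node of residue `i` moves a
bead from `i` to `i + 1`. This is exactly how step `r` of the flow moves `t ∈ T_r` from
`S_{i_r}` to `S_{i_r + 1}`, so by induction `t ∈ S⁽ʳ⁾_p` iff `p` is a bead position of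
the `t`-th component of `T⁽ʳ⁾`.
-/

structure HasAtMostRows (ℓ : ℕ) (sh : ℕ → ℕ) : Prop where
  antitone : Antitone sh
  eq_zero : ∀ q, ℓ ≤ q → sh q = 0

def betaSet (ℓ : ℕ) (sh : ℕ → ℕ) : Set ℤ :=
  (fun q => resOf ℓ q (sh q)) '' Set.Iio ℓ

section BetaSet

variable {ℓ : ℕ} {sh : ℕ → ℕ}

theorem strictAnti_resOf_rowEnd (hA : Antitone sh) (ℓ : ℕ) :
    StrictAnti fun q => resOf ℓ q (sh q) := fun a b hab => by
  have := hA hab.le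
  simp only [resOf]
  omega

theorem HasAtMostRows.lt_of_resOf_pos (h : HasAtMostRows ℓ sh) {q : ℕ}
    (hpos : 0 < resOf ℓ q (sh q)) : q < ℓ := by
  by_contra hq
  have := h.eq_zero q (by omega)
  simp only [resOf] at hpos
  omega

theorem antitone_update_succ (hA : Antitone sh) {q : ℕ} (hq : q = 0 ∨ sh q < sh (q - 1)) :
    Antitone (Function.update sh q (sh q + 1)) := by
  intro a b hab
  simp only [Function.update_apply]
  have := hA hab
  split_ifs with hb ha ha <;> subst_vars
  · rfl
  · have := hA (show a ≤ b - 1 by omega)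
    omega
  · omega
  · exact this

theorem addable_of_succ_notMem_betaSet (hA : Antitone sh) {q : ℕ} (hq : q < ℓ)
    (hnext : resOf ℓ q (sh q) + 1 ∉ betaSet ℓ sh) : q = 0 ∨ sh q < sh (q - 1) := by
  by_contra! hcon
  have hle := hA (Nat.sub_le q 1)
  refine hnext ⟨q - 1, show q - 1 < ℓ by omega, ?_⟩
  simp only [resOf]
  omega

theorem exists_addable_iff (h : HasAtMostRows ℓ sh) {ρ : ℤ} (hρ : 0 < ρ) :
    (∃ r c, IsAddableCell sh r c ∧ resOf ℓ r c = ρ) ↔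
      ρ ∈ betaSet ℓ sh ∧ ρ + 1 ∉ betaSet ℓ sh := by
  constructor
  · rintro ⟨r, _, ⟨rfl, hadd⟩, rfl⟩
    refine ⟨⟨r, h.lt_of_resOf_pos hρ, rfl⟩, ?_⟩
    rintro ⟨q, -, hq : resOf ℓ q (sh q) = resOf ℓ r (sh r) + 1⟩
    have hqr : q < r := (strictAnti_resOf_rowEnd h.antitone ℓ).lt_iff_gt.mp (by omega)
    have := h.antitone (show q ≤ r - 1 by omega)
    simp only [resOf] at hq
    omega
  · rintro ⟨⟨q, hq, rfl⟩, hnext⟩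
    exact ⟨q, sh q, ⟨rfl, addable_of_succ_notMem_betaSet h.antitone hq hnext⟩, rfl⟩

theorem exists_removable_iff (h : HasAtMostRows ℓ sh) {ρ : ℤ} (hρ : 0 < ρ) :
    (∃ r c, IsRemovableCell sh r c ∧ resOf ℓ r c = ρ) ↔
      ρ + 1 ∈ betaSet ℓ sh ∧ ρ ∉ betaSet ℓ sh := by
  constructor
  · rintro ⟨r, c, ⟨hc, hlt⟩, rfl⟩
    have hend : resOf ℓ r (sh r) = resOf ℓ r c + 1 := by
      simp only [resOf]
      omega
    refine ⟨⟨r, h.lt_of_resOf_pos (by omega), hend⟩, ?_⟩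
    rintro ⟨q, -, hq : resOf ℓ q (sh q) = resOf ℓ r c⟩
    have hrq : r < q := (strictAnti_resOf_rowEnd h.antitone ℓ).lt_iff_gt.mp (by omega)
    have := h.antitone (show r + 1 ≤ q by omega)
    simp only [resOf] at hq hend
    omega
  · rintro ⟨⟨q, hq, hend⟩, hnot⟩
    have hlt : sh (q + 1) < sh q := by
      by_contra! hge
      have heq : sh (q + 1) = sh q := le_antisymm (h.antitone (Nat.le_succ q)) hge
      by_cases hq1 : q + 1 < ℓ
      · refine hnot ⟨q + 1, hq1, ?_⟩
        simp only [resOf] at hend ⊢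
        omega
      · have := h.eq_zero (q + 1) (by omega)
        simp only [resOf] at hend
        omega
    refine ⟨q, sh q - 1, ⟨by omega, hlt⟩, ?_⟩
    simp only [resOf] at hend ⊢
    omega

theorem addRes_eq_update (hA : Antitone sh) {q : ℕ} (hq : q = 0 ∨ sh q < sh (q - 1)) :
    addRes ℓ sh (resOf ℓ q (sh q)) = Function.update sh q (sh q + 1) := by
  have hex : ∃ r, (r = 0 ∨ sh r < sh (r - 1)) ∧
      (sh r : ℤ) - (r : ℤ) + (ℓ : ℤ) = resOf ℓ q (sh q) := ⟨q, hq, rfl⟩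
  have hchoose : hex.choose = q :=
    (strictAnti_resOf_rowEnd hA ℓ).injective hex.choose_spec.2
  rw [addRes, dif_pos hex, hchoose]

theorem HasAtMostRows.addRes (h : HasAtMostRows ℓ sh) {k : ℤ} (hk : 0 < k) :
    HasAtMostRows ℓ (addRes ℓ sh k) := by
  rw [SlnWeb.addRes]
  split_ifs with hex
  · obtain ⟨hadd, hres⟩ := hex.choose_spec
    have hrow : hex.choose < ℓ := h.lt_of_resOf_pos (hres.trans_gt hk)
    refine ⟨antitone_update_succ h.antitone hadd, fun q hq => ?_⟩
    rw [Function.update_of_ne (by omega)]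
    exact h.eq_zero q hq
  · exact h

theorem mem_betaSet_update_succ (hA : Antitone sh) {q : ℕ} (hq : q < ℓ) {p : ℤ} :
    p ∈ betaSet ℓ (Function.update sh q (sh q + 1)) ↔
      p = resOf ℓ q (sh q) + 1 ∨ (p ≠ resOf ℓ q (sh q) ∧ p ∈ betaSet ℓ sh) := by
  have hinj := (strictAnti_resOf_rowEnd hA ℓ).injective
  constructor
  · rintro ⟨q', hq', rfl⟩
    by_cases hqq : q' = q
    · subst hqq
      left
      simp only [Function.update_self, resOf]
      push_cast
      ring
    · right
      simp only [Function.update_of_ne hqq]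
      exact ⟨fun he => hqq (hinj he), q', hq', rfl⟩
  · rintro (rfl | ⟨hne, q', hq', rfl⟩)
    · refine ⟨q, hq, ?_⟩
      simp only [Function.update_self, resOf]
      push_cast
      ring
    · have hqq : q' ≠ q := by
        rintro rfl
        exact hne rfl
      exact ⟨q', hq', by simp only [Function.update_of_ne hqq]⟩

theorem mem_betaSet_addRes (hA : Antitone sh) {k : ℤ} (hk : k ∈ betaSet ℓ sh)
    (hk1 : k + 1 ∉ betaSet ℓ sh) {p : ℤ} :
    p ∈ betaSet ℓ (addRes ℓ sh k) ↔ p = k + 1 ∨ (p ≠ k ∧ p ∈ betaSet ℓ sh) := by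
  obtain ⟨q, hq, rfl⟩ := hk
  rw [addRes_eq_update hA (addable_of_succ_notMem_betaSet hA hq hk1)]
  exact mem_betaSet_update_succ hA hq

theorem mem_betaSet_zero {p : ℤ} : p ∈ betaSet ℓ (fun _ => 0) ↔ 1 ≤ p ∧ p ≤ ℓ := by
  constructor
  · rintro ⟨q, hq, rfl⟩
    simp only [Set.mem_Iio] at hq
    simp only [resOf]
    omega
  · rintro ⟨h1, h2⟩
    refine ⟨(ℓ - p).toNat, show (ℓ - p).toNat < ℓ by omega, ?_⟩
    simp only [resOf]
    omega

end BetaSet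

section Flow

variable {n ℓ m s : ℕ} (P : LadderPresentation n ℓ m s) (f : LadderFlow P)

theorem iotaAux_succ_shape {r : ℕ} (hr : r < s) (t : ℕ) :
    (iotaAux P f (r + 1)).shape t =
      if t ∈ f.T ⟨r, hr⟩ then addRes ℓ ((iotaAux P f r).shape t) (P.res ⟨r, hr⟩)
      else (iotaAux P f r).shape t := by
  simp only [iotaAux, dif_pos hr]
  rfl

theorem hasAtMostRows_iotaAux_shape (r t : ℕ) : HasAtMostRows ℓ ((iotaAux P f r).shape t) := by
  induction r with
  | zero => exact ⟨antitone_const, fun _ _ => rfl⟩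
  | succ r ih =>
    by_cases hr : r < s
    · rw [iotaAux_succ_shape P f hr]
      split_ifs
      · exact ih.addRes (by have := P.res_pos ⟨r, hr⟩; omega)
      · exact ih
    · simp only [iotaAux, dif_neg hr]
      exact ih

variable {P}

theorem LadderFlow.mem_S_succ_of_mem_T {r : Fin s} {t : ℕ} (ht : t ∈ f.T r) (p : ℕ) :
    t ∈ f.S r.succ p ↔ p = P.res r + 1 ∨ (p ≠ P.res r ∧ t ∈ f.S r.castSucc p) := by
  by_cases hp : p = P.res r
  · subst hp
    simp [f.S_step_res, ht]
  · by_cases hp1 : p = P.res r + 1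
    · subst hp1
      simp [f.S_step_res1, ht]
    · simp [f.S_step_other r p hp hp1, hp, hp1]

theorem LadderFlow.mem_S_succ_of_notMem_T {r : Fin s} {t : ℕ} (ht : t ∉ f.T r) (p : ℕ) :
    t ∈ f.S r.succ p ↔ t ∈ f.S r.castSucc p := by
  by_cases hp : p = P.res r
  · subst hp
    simp [f.S_step_res, ht]
  · by_cases hp1 : p = P.res r + 1
    · subst hp1
      simp [f.S_step_res1, ht]
    · rw [f.S_step_other r p hp hp1]

theorem LadderFlow.mem_S_iff_mem_betaSet {t : ℕ} (ht₁ : 1 ≤ t) (ht₂ : t ≤ n) :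
    ∀ r (hr : r ≤ s) p, 1 ≤ p → p ≤ m →
      (t ∈ f.S ⟨r, Nat.lt_succ_of_le hr⟩ p ↔ (p : ℤ) ∈ betaSet ℓ ((iotaAux P f r).shape t)) := by
  intro r
  induction r with
  | zero =>
    intro hr p hp₁ hp₂
    change t ∈ f.S 0 p ↔ (p : ℤ) ∈ betaSet ℓ (fun _ => 0)
    rw [f.S_init p hp₁ hp₂, mem_betaSet_zero]
    split_ifs <;> simp [ht₁, ht₂] <;> omega
  | succ r ih =>
    intro hr p hp₁ hp₂
    have ih' : ∀ p, 1 ≤ p → p ≤ m → (t ∈ f.S (Fin.castSucc ⟨r, hr⟩) p ↔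
        (p : ℤ) ∈ betaSet ℓ ((iotaAux P f r).shape t)) := ih (Nat.le_of_succ_le hr)
    change t ∈ f.S (Fin.succ ⟨r, hr⟩) p ↔ _
    have hi₁ : 1 ≤ P.res ⟨r, hr⟩ := P.res_pos _
    have hi₂ : P.res ⟨r, hr⟩ < m := P.res_lt _
    rw [iotaAux_succ_shape P f hr]
    split_ifs with hT
    · have hbead : (P.res ⟨r, hr⟩ : ℤ) ∈ betaSet ℓ ((iotaAux P f r).shape t) :=
        (ih' _ hi₁ hi₂.le).mp (f.T_sub _ hT)
      have hgap : (P.res ⟨r, hr⟩ : ℤ) + 1 ∉ betaSet ℓ ((iotaAux P f r).shape t) := fun hb =>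
        Finset.disjoint_left.mp (f.T_disj _) hT
          ((ih' (P.res ⟨r, hr⟩ + 1) (by omega) hi₂).mpr (by exact_mod_cast hb))
      rw [f.mem_S_succ_of_mem_T hT, ih' p hp₁ hp₂,
        mem_betaSet_addRes (hasAtMostRows_iotaAux_shape P f r t).antitone hbead hgap]
      norm_cast
    · rw [f.mem_S_succ_of_notMem_T hT, ih' p hp₁ hp₂]

end Flow

theorem addable_removable_from_boundary_general (n ℓ m : ℕ)
    (s : ℕ) (P : LadderPresentation n ℓ m s)
    (f : LadderFlow P) (r : ℕ) (hr : r ≤ s) (ρ : ℕ) (hρ₁ : 1 ≤ ρ) (hρ₂ : ρ < m)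
    (t : ℕ) (ht₁ : 1 ≤ t) (ht₂ : t ≤ n) :
    ((∃ r' c, IsAddableCell ((iotaAux P f r).shape t) r' c ∧
        resOf ℓ r' c = (ρ : ℤ)) ↔
      (t ∈ f.S ⟨r, Nat.lt_succ_of_le hr⟩ ρ ∧
        t ∉ f.S ⟨r, Nat.lt_succ_of_le hr⟩ (ρ + 1))) ∧
    ((∃ r' c, IsRemovableCell ((iotaAux P f r).shape t) r' c ∧
        resOf ℓ r' c = (ρ : ℤ)) ↔
      (t ∈ f.S ⟨r, Nat.lt_succ_of_le hr⟩ (ρ + 1) ∧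
        t ∉ f.S ⟨r, Nat.lt_succ_of_le hr⟩ ρ)) := by
  have hsh := hasAtMostRows_iotaAux_shape P f r t
  have hS := f.mem_S_iff_mem_betaSet ht₁ ht₂ r hr
  have hρ : (0 : ℤ) < ρ := by exact_mod_cast hρ₁
  rw [exists_addable_iff hsh hρ, exists_removable_iff hsh hρ, hS ρ hρ₁ hρ₂.le,
    hS (ρ + 1) (by omega) hρ₂]
  push_cast
  exact ⟨Iff.rfl, Iff.rfl⟩

theorem addable_removable_from_boundary (n ℓ m : ℕ) (hn : 2 ≤ n) (hℓ : 1 ≤ ℓ)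
    (hm : ℓ + 1 ≤ m) (s : ℕ) (P : LadderPresentation n ℓ m s) (hP : IsValid P)
    (f : LadderFlow P) (r : ℕ) (hr : r ≤ s) (ρ : ℕ) (hρ₁ : 1 ≤ ρ) (hρ₂ : ρ < m)
    (t : ℕ) (ht₁ : 1 ≤ t) (ht₂ : t ≤ n) :
    ((∃ r' c, IsAddableCell ((iotaAux P f r).shape t) r' c ∧
        resOf ℓ r' c = (ρ : ℤ)) ↔
      (t ∈ f.S ⟨r, Nat.lt_succ_of_le hr⟩ ρ ∧
        t ∉ f.S ⟨r, Nat.lt_succ_of_le hr⟩ (ρ + 1))) ∧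
    ((∃ r' c, IsRemovableCell ((iotaAux P f r).shape t) r' c ∧
        resOf ℓ r' c = (ρ : ℤ)) ↔
      (t ∈ f.S ⟨r, Nat.lt_succ_of_le hr⟩ (ρ + 1) ∧
        t ∉ f.S ⟨r, Nat.lt_succ_of_le hr⟩ ρ)) :=
  addable_removable_from_boundary_general n ℓ m s P f r hr ρ hρ₁ hρ₂ t ht₁ ht₂

end

end SlnWeb
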